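/- For all n ≥ 0, s(2n+1) = s(n) + t(n), where s and t are the Rudin-Shapiro summatory functions. -/

import Mathlib

def rs : ℕ → ℤ
  | 0 => 1
  | (n+1) =>
    if (n+1) % 2 = 0 then rs ((n+1)/2)
    else (-1)^((n+1)/2) * rs ((n+1)/2)
decreasing_by all_goals exact Nat.div_lt_self (Nat.succ_pos n) (by norm_num)

def s (n : ℕ) : ℤ := ∑ i ∈ Finset.range (n+1), rs i

def t (n : ℕ) : ℤ := ∑ i ∈ Finset.range (n+1), (-1)^i * rs i

theorem sum_range_two_mul_eq_sum_pairs {M : Type*} [AddCommMonoid M] (f : ℕ → M) (n : ℕ) :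
    ∑ i ∈ Finset.range (2 * n), f i = ∑ k ∈ Finset.range n, (f (2 * k) + f (2 * k + 1)) := by
  induction n with
  | zero => simp
  | succ n ih =>
    rw [show 2 * (n + 1) = 2 * n + 1 + 1 by ring, Finset.sum_range_succ, Finset.sum_range_succ,
      ih, Finset.sum_range_succ, add_assoc]

theorem rs_two_mul (k : ℕ) : rs (2 * k) = rs k := by
  cases k with
  | zero => rfl
  | succ k =>
    rw [show 2 * (k + 1) = 2 * k + 1 + 1 by ring, rs, if_pos (by omega)]
    congr 1
    omega

theorem rs_two_mul_add_one (k : ℕ) : rs (2 * k + 1) = (-1) ^ k * rs k := by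
  rw [rs, if_neg (by omega), Nat.mul_add_div two_pos, Nat.div_eq_of_lt one_lt_two, add_zero]

theorem stmt1 : ∀ n : ℕ, s (2*n+1) = s n + t n := by
  intro n
  calc s (2 * n + 1)
      = ∑ k ∈ Finset.range (n + 1), (rs (2 * k) + rs (2 * k + 1)) := by
        rw [s, show 2 * n + 1 + 1 = 2 * (n + 1) by ring, sum_range_two_mul_eq_sum_pairs]
    _ = ∑ k ∈ Finset.range (n + 1), (rs k + (-1) ^ k * rs k) := by
        simp only [rs_two_mul, rs_two_mul_add_one]
    _ = s n + t n := Finset.sum_add_distrib
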